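/- ∑_{m₁,…,m₅ ≥ 1} 1/(m₁⁶ (m₁+m₂)⁶ (m₁+m₂+m₃)⁶ (m₁+m₂+m₃+m₄)⁶ (m₁+m₂+m₃+m₄+m₅)⁶) = π³⁰/1347828286825972065254765625. -/

import Mathlib

/-!
The series is the fifth elementary symmetric function `e₅` of the family `(n⁻⁶)_{n ≥ 1}`.
Multiplying `∑ₙ g n` into a nested sum and splitting each pair of indices by their order
(the stuffle product) gives `p_j e_{k+1} = T_{j,k+1} + T_{j+1,k}`, where `p_j = ζ(6j)` and
`T_{j,k}` is the nested sum with `k + 1` factors one of which is raised to the `j`-th power.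
Since `T_{1,k} = (k+1) e_{k+1}` and `T_{j,0} = p_j`, these telescope to Newton's identities
`(k+1) e_{k+1} = ∑_{i ≤ k} (-1)^i p_{i+1} e_{k-i}`, and Euler's evaluation of `ζ(6j)` through
Bernoulli numbers then determines `e₁, …, e₅` in turn. All rearrangements are done in `ℝ≥0∞`,
where they hold unconditionally; finiteness comes from `∑ n⁻⁶ < ∞`.
-/

open Finset Real
open scoped ENNReal Nat

lemma tsum_pnat_ite_lt (a : ℕ+) (g : ℕ+ → ℝ≥0∞) :
    ∑' n : ℕ+, (if a < n then g n else 0) = ∑' d : ℕ+, g (a + d) := by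
  rw [← (add_right_injective a).tsum_eq (f := fun n => if a < n then g n else 0)]
  · simp [PNat.lt_add_right]
  · intro n hn
    exact ⟨n - a, PNat.add_sub_of_lt (by by_contra h; simp [h] at hn)⟩

lemma tsum_tsum_pnat_eq_add_add (F : ℕ+ → ℕ+ → ℝ≥0∞) :
    ∑' a, ∑' c, F a c = ∑' a, ∑' d, F a (a + d) + ∑' a, F a a + ∑' c, ∑' d, F (c + d) c := by
  have hsplit : ∀ a c, F a c = (if a < c then F a c else 0) + (if c = a then F a c else 0)
      + (if c < a then F a c else 0) := by
    intro a c
    rcases lt_trichotomy a c with h | rfl | h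
    · simp [h, h.ne', not_lt_of_gt h]
    · simp
    · simp [h, h.ne, not_lt_of_gt h]
  calc ∑' a, ∑' c, F a c
      = ∑' a, ∑' c, (if a < c then F a c else 0) + ∑' a, ∑' c, (if c = a then F a c else 0)
          + ∑' c, ∑' a, (if c < a then F a c else 0) := by
        rw [ENNReal.tsum_comm (f := fun c a => if c < a then F a c else 0), ← ENNReal.tsum_add,
          ← ENNReal.tsum_add]
        refine tsum_congr fun a => ?_
        rw [← ENNReal.tsum_add, ← ENNReal.tsum_add]
        exact tsum_congr (hsplit a)
    _ = _ := by simp only [tsum_pnat_ite_lt, tsum_ite_eq]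

lemma tsum_pnat_add_le (f : ℕ → ℝ≥0∞) (b : ℕ) : ∑' m : ℕ+, f (b + m) ≤ ∑' m : ℕ+, f m := by
  have hinj : Function.Injective fun m : ℕ+ => (⟨b + m, by positivity⟩ : ℕ+) := fun m m' h => by
    simpa using congrArg PNat.val h
  exact ENNReal.tsum_comp_le_tsum_of_injective hinj fun n : ℕ+ => f n

namespace Stuffle

variable (x : ℕ → ℝ≥0∞)

-- `esymmAbove x k b = ∑_{b < n₁ < ⋯ < n_k} x n₁ ⋯ x n_k`
noncomputable def esymmAbove : ℕ → ℕ → ℝ≥0∞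
  | 0, _ => 1
  | k + 1, b => ∑' m : ℕ+, x (b + m) * esymmAbove k (b + m)

-- `esymmInsert x g k b = ∑_{b < n₀ < ⋯ < n_k} ∑ᵢ g nᵢ ∏_{l ≠ i} x nₗ`
noncomputable def esymmInsert (g : ℕ → ℝ≥0∞) : ℕ → ℕ → ℝ≥0∞
  | 0, b => ∑' m : ℕ+, g (b + m)
  | k + 1, b => ∑' m : ℕ+, g (b + m) * esymmAbove x (k + 1) (b + m)
      + ∑' m : ℕ+, x (b + m) * esymmInsert g k (b + m)

@[simp]
lemma esymmAbove_zero (b : ℕ) : esymmAbove x 0 b = 1 := rfl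

noncomputable def psum (j : ℕ) : ℝ≥0∞ := ∑' m : ℕ+, x m ^ j

lemma tsum_mul_esymmAbove_succ_eq_add_add (g : ℕ → ℝ≥0∞) (k b : ℕ) :
    (∑' m : ℕ+, g (b + m)) * esymmAbove x (k + 1) b
      = ∑' m : ℕ+, g (b + m) * esymmAbove x (k + 1) (b + m)
        + ∑' m : ℕ+, (g * x) (b + m) * esymmAbove x k (b + m)
        + ∑' m : ℕ+, x (b + m) * ((∑' d : ℕ+, g (b + m + d)) * esymmAbove x k (b + m)) := by
  have hcoe : ∀ a d : ℕ+, b + ((a + d : ℕ+) : ℕ) = b + a + d := fun a d => by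
    rw [PNat.add_coe, add_assoc]
  rw [esymmAbove, ← ENNReal.tsum_mul_right]
  simp_rw [← ENNReal.tsum_mul_left]
  rw [tsum_tsum_pnat_eq_add_add]
  congr 2
  · refine tsum_congr fun a => ?_
    rw [esymmAbove, ← ENNReal.tsum_mul_left]
    simp only [hcoe]
  · simp only [Pi.mul_apply, mul_assoc]
  · ext c
    simp only [ENNReal.tsum_mul_right, hcoe]
    ring

theorem tsum_mul_esymmAbove_succ (g : ℕ → ℝ≥0∞) (k b : ℕ) :
    (∑' m : ℕ+, g (b + m)) * esymmAbove x (k + 1) b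
      = esymmInsert x g (k + 1) b + esymmInsert x (g * x) k b := by
  induction k generalizing b with
  | zero =>
    rw [tsum_mul_esymmAbove_succ_eq_add_add]
    simp only [esymmAbove, esymmInsert, mul_one]
    ring
  | succ k ih =>
    rw [tsum_mul_esymmAbove_succ_eq_add_add]
    simp only [ih, mul_add, ENNReal.tsum_add, esymmInsert]
    ring

theorem esymmInsert_self (k b : ℕ) :
    esymmInsert x x k b = (k + 1 : ℕ) * esymmAbove x (k + 1) b := by
  induction k generalizing b with
  | zero => simp [esymmInsert, esymmAbove]
  | succ k ih =>
    rw [esymmInsert, esymmAbove.eq_2 x, ← ENNReal.tsum_mul_left, ← ENNReal.tsum_add]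
    refine tsum_congr fun m => ?_
    rw [ih]
    push_cast
    ring

variable {x}

lemma esymmAbove_le_pow (k b : ℕ) : esymmAbove x k b ≤ (∑' m : ℕ+, x m) ^ k := by
  induction k generalizing b with
  | zero => simp [esymmAbove]
  | succ k ih =>
    calc esymmAbove x (k + 1) b ≤ ∑' m : ℕ+, x (b + m) * (∑' m : ℕ+, x m) ^ k :=
          ENNReal.tsum_le_tsum fun m => mul_le_mul_right (ih _) _
      _ ≤ (∑' m : ℕ+, x m) ^ (k + 1) := by
          rw [ENNReal.tsum_mul_right, pow_succ']
          exact mul_le_mul_left (tsum_pnat_add_le x b) _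

lemma psum_succ_le_pow (j : ℕ) : psum x (j + 1) ≤ (∑' m : ℕ+, x m) ^ (j + 1) := by
  calc psum x (j + 1) ≤ ∑' m : ℕ+, (∑' m : ℕ+, x m) ^ j * x m :=
        ENNReal.tsum_le_tsum fun m => by
          rw [pow_succ]
          gcongr
          exact ENNReal.le_tsum m
    _ = (∑' m : ℕ+, x m) ^ (j + 1) := by rw [ENNReal.tsum_mul_left, pow_succ]

theorem toReal_esymmInsert_pow_eq_sum (hx : ∑' m : ℕ+, x m ≠ ⊤) (n j : ℕ) :
    (esymmInsert x (x ^ (j + 1)) n 0).toReal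
      = ∑ i ∈ range (n + 1), (-1) ^ i * (psum x (j + 1 + i)).toReal
          * (esymmAbove x (n - i) 0).toReal := by
  have he (k : ℕ) : esymmAbove x k 0 ≠ ⊤ :=
    ne_top_of_le_ne_top (ENNReal.pow_ne_top hx) (esymmAbove_le_pow k 0)
  have hp (j : ℕ) : psum x (j + 1) ≠ ⊤ :=
    ne_top_of_le_ne_top (ENNReal.pow_ne_top hx) (psum_succ_le_pow j)
  have hstuffle (j k : ℕ) : psum x (j + 1) * esymmAbove x (k + 1) 0
      = esymmInsert x (x ^ (j + 1)) (k + 1) 0 + esymmInsert x (x ^ (j + 2)) k 0 := by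
    simpa [psum, pow_succ] using tsum_mul_esymmAbove_succ x (x ^ (j + 1)) k 0
  have ht (j k : ℕ) : esymmInsert x (x ^ (j + 1)) k 0 ≠ ⊤ := by
    cases k with
    | zero => simpa [esymmInsert, psum] using hp j
    | succ k =>
      exact ne_top_of_le_ne_top (ENNReal.mul_ne_top (hp j) (he _)) (hstuffle j k ▸ le_self_add)
  induction n generalizing j with
  | zero => simp [esymmInsert, psum]
  | succ n ih =>
    have h := congrArg ENNReal.toReal (hstuffle j n)
    rw [ENNReal.toReal_mul, ENNReal.toReal_add (ht _ _) (ht _ _), ih] at h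
    rw [sum_range_succ']
    have hshift : ∑ i ∈ range (n + 1), (-1) ^ (i + 1) * (psum x (j + 1 + (i + 1))).toReal
          * (esymmAbove x (n + 1 - (i + 1)) 0).toReal
        = -∑ i ∈ range (n + 1), (-1) ^ i * (psum x (j + 1 + 1 + i)).toReal
          * (esymmAbove x (n - i) 0).toReal := by
      rw [← sum_neg_distrib]
      refine sum_congr rfl fun i _ => ?_
      rw [show j + 1 + (i + 1) = j + 1 + 1 + i by omega, Nat.add_sub_add_right]
      ring
    rw [hshift]
    simp only [pow_zero, one_mul, add_zero, Nat.sub_zero]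
    linear_combination -h

theorem mul_toReal_esymmAbove_eq_sum (hx : ∑' m : ℕ+, x m ≠ ⊤) (k : ℕ) :
    (k + 1) * (esymmAbove x (k + 1) 0).toReal
      = ∑ i ∈ range (k + 1), (-1) ^ i * (psum x (i + 1)).toReal
          * (esymmAbove x (k - i) 0).toReal := by
  have h := toReal_esymmInsert_pow_eq_sum hx k 0
  rw [pow_one, esymmInsert_self, ENNReal.toReal_mul, ENNReal.toReal_natCast] at h
  simpa [add_comm 1] using h

theorem toReal_esymmAbove_succ (hx : ∑' m : ℕ+, x m ≠ ⊤) (k b : ℕ) :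
    (esymmAbove x (k + 1) b).toReal
      = ∑' m : ℕ+, (x (b + m)).toReal * (esymmAbove x k (b + m)).toReal := by
  have hxb (m : ℕ+) : x (b + m) ≠ ⊤ :=
    ENNReal.ne_top_of_tsum_ne_top hx ⟨b + m, by positivity⟩
  have he (m : ℕ+) : esymmAbove x k (b + m) ≠ ⊤ :=
    ne_top_of_le_ne_top (ENNReal.pow_ne_top hx) (esymmAbove_le_pow k _)
  rw [esymmAbove, ENNReal.tsum_toReal_eq fun m => ENNReal.mul_ne_top (hxb m) (he m)]
  simp only [ENNReal.toReal_mul]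

end Stuffle

@[simp]
theorem bernoulli'_six : bernoulli' 6 = 1 / 42 := by
  have h := sum_bernoulli' 7
  norm_num [sum_range_succ, bernoulli'_eq_zero_of_odd,
    Nat.choose_eq_descFactorial_div_factorial] at h
  linarith

@[simp]
theorem bernoulli'_eight : bernoulli' 8 = -1 / 30 := by
  have h := sum_bernoulli' 9
  norm_num [sum_range_succ, bernoulli'_eq_zero_of_odd,
    Nat.choose_eq_descFactorial_div_factorial] at h
  linarith

@[simp]
theorem bernoulli'_ten : bernoulli' 10 = 5 / 66 := by
  have h := sum_bernoulli' 11
  norm_num [sum_range_succ, bernoulli'_eq_zero_of_odd,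
    Nat.choose_eq_descFactorial_div_factorial] at h
  linarith

@[simp]
theorem bernoulli'_twelve : bernoulli' 12 = -691 / 2730 := by
  have h := sum_bernoulli' 13
  norm_num [sum_range_succ, bernoulli'_eq_zero_of_odd,
    Nat.choose_eq_descFactorial_div_factorial] at h
  linarith

@[simp]
theorem bernoulli'_fourteen : bernoulli' 14 = 7 / 6 := by
  have h := sum_bernoulli' 15
  norm_num [sum_range_succ, bernoulli'_eq_zero_of_odd,
    Nat.choose_eq_descFactorial_div_factorial] at h
  linarith

@[simp]
theorem bernoulli'_sixteen : bernoulli' 16 = -3617 / 510 := by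
  have h := sum_bernoulli' 17
  norm_num [sum_range_succ, bernoulli'_eq_zero_of_odd,
    Nat.choose_eq_descFactorial_div_factorial] at h
  linarith

@[simp]
theorem bernoulli'_eighteen : bernoulli' 18 = 43867 / 798 := by
  have h := sum_bernoulli' 19
  norm_num [sum_range_succ, bernoulli'_eq_zero_of_odd,
    Nat.choose_eq_descFactorial_div_factorial] at h
  linarith

@[simp]
theorem bernoulli'_twenty : bernoulli' 20 = -174611 / 330 := by
  have h := sum_bernoulli' 21
  norm_num [sum_range_succ, bernoulli'_eq_zero_of_odd,
    Nat.choose_eq_descFactorial_div_factorial] at h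
  linarith

@[simp]
theorem bernoulli'_twenty_two : bernoulli' 22 = 854513 / 138 := by
  have h := sum_bernoulli' 23
  norm_num [sum_range_succ, bernoulli'_eq_zero_of_odd,
    Nat.choose_eq_descFactorial_div_factorial] at h
  linarith

@[simp]
theorem bernoulli'_twenty_four : bernoulli' 24 = -236364091 / 2730 := by
  have h := sum_bernoulli' 25
  norm_num [sum_range_succ, bernoulli'_eq_zero_of_odd,
    Nat.choose_eq_descFactorial_div_factorial] at h
  linarith

@[simp]
theorem bernoulli'_twenty_six : bernoulli' 26 = 8553103 / 6 := by
  have h := sum_bernoulli' 27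
  norm_num [sum_range_succ, bernoulli'_eq_zero_of_odd,
    Nat.choose_eq_descFactorial_div_factorial] at h
  linarith

@[simp]
theorem bernoulli'_twenty_eight : bernoulli' 28 = -23749461029 / 870 := by
  have h := sum_bernoulli' 29
  norm_num [sum_range_succ, bernoulli'_eq_zero_of_odd,
    Nat.choose_eq_descFactorial_div_factorial] at h
  linarith

@[simp]
theorem bernoulli'_thirty : bernoulli' 30 = 8615841276005 / 14322 := by
  have h := sum_bernoulli' 31
  norm_num [sum_range_succ, bernoulli'_eq_zero_of_odd,
    Nat.choose_eq_descFactorial_div_factorial] at h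
  linarith

theorem tsum_one_div_nat_pow_eq_bernoulli' {s k : ℕ} (hs : s = 2 * k) (hk : k ≠ 0) :
    ∑' n : ℕ, 1 / (n : ℝ) ^ s = (-1) ^ (k + 1) * 2 ^ (s - 1) * π ^ s * bernoulli' s / s ! := by
  subst hs
  rw [(hasSum_zeta_nat hk).tsum_eq, bernoulli_eq_bernoulli'_of_ne_one (by omega)]

-- At `n = 0` this is `⊤`; only `n ≥ 1` is ever summed.
noncomputable def invPow (s n : ℕ) : ℝ≥0∞ := ((n : ℝ≥0∞) ^ s)⁻¹

lemma toReal_invPow (s n : ℕ) : (invPow s n).toReal = 1 / (n : ℝ) ^ s := by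
  simp [invPow]

lemma invPow_ne_top (s : ℕ) {n : ℕ} (hn : n ≠ 0) : invPow s n ≠ ⊤ := by
  simp [invPow, hn]

lemma tsum_invPow_ne_top {s : ℕ} (hs : 1 < s) : ∑' m : ℕ+, invPow s m ≠ ⊤ := by
  have hsum : Summable fun m : ℕ+ => (invPow s m).toReal := by
    simp only [toReal_invPow]
    exact (Real.summable_one_div_nat_pow.2 hs).comp_injective PNat.coe_injective
  have hofReal : ∑' m : ℕ+, invPow s m = ENNReal.ofReal (∑' m : ℕ+, (invPow s m).toReal) := by
    rw [ENNReal.ofReal_tsum_of_nonneg (fun _ => ENNReal.toReal_nonneg) hsum]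
    exact tsum_congr fun m => (ENNReal.ofReal_toReal (invPow_ne_top s m.ne_zero)).symm
  rw [hofReal]
  exact ENNReal.ofReal_ne_top

lemma toReal_psum_invPow {s j : ℕ} (hs : s ≠ 0) (hj : j ≠ 0) :
    (Stuffle.psum (invPow s) j).toReal = ∑' n : ℕ, 1 / (n : ℝ) ^ (s * j) := by
  rw [Stuffle.psum,
    ENNReal.tsum_toReal_eq fun m => ENNReal.pow_ne_top (invPow_ne_top s m.ne_zero)]
  simp only [ENNReal.toReal_pow, toReal_invPow, div_pow, one_pow, ← pow_mul]
  exact tsum_pnat_eq_tsum_of_eq_zero (f := fun n : ℕ => 1 / (n : ℝ) ^ (s * j)) (by simp [hs, hj])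

open Stuffle in
theorem toReal_esymmAbove_invPow_six_five :
    (esymmAbove (invPow 6) 5 0).toReal = π ^ 30 / 1347828286825972065254765625 := by
  have hx : ∑' m : ℕ+, invPow 6 m ≠ ⊤ := tsum_invPow_ne_top (by norm_num)
  have hp (j : ℕ) (hj : j ≠ 0) : (psum (invPow 6) j).toReal
      = (-1) ^ (3 * j + 1) * 2 ^ (6 * j - 1) * π ^ (6 * j) * bernoulli' (6 * j) / (6 * j)! := by
    rw [toReal_psum_invPow (by norm_num) hj,
      tsum_one_div_nat_pow_eq_bernoulli' (k := 3 * j) (by ring) (by omega)]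
  have newton := mul_toReal_esymmAbove_eq_sum hx
  have h1 := newton 0
  have h2 := newton 1
  have h3 := newton 2
  have h4 := newton 3
  have h5 := newton 4
  norm_num [sum_range_succ, hp] at h1 h2 h3 h4 h5
  have e1 : (esymmAbove (invPow 6) 1 0).toReal = π ^ 6 / 945 := by linear_combination h1
  have e2 : (esymmAbove (invPow 6) 2 0).toReal = 4 * π ^ 12 / 212837625 := by
    rw [e1] at h2
    linear_combination h2 / 2
  have e3 : (esymmAbove (invPow 6) 3 0).toReal = 2 * π ^ 18 / 64965492466875 := by
    rw [e1, e2] at h3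
    linear_combination h3 / 3
  have e4 : (esymmAbove (invPow 6) 4 0).toReal = 4 * π ^ 24 / 432684797065192546875 := by
    rw [e1, e2, e3] at h4
    linear_combination h4 / 4
  rw [e1, e2, e3, e4] at h5
  linear_combination h5 / 5

theorem stmt_13 :
    ∑' (m₁ : ℕ+), ∑' (m₂ : ℕ+), ∑' (m₃ : ℕ+), ∑' (m₄ : ℕ+), ∑' (m₅ : ℕ+),
        (1 : ℝ) /
          (((m₁ : ℕ) : ℝ) ^ 6 *
            (((m₁ : ℕ) : ℝ) + ((m₂ : ℕ) : ℝ)) ^ 6 *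
            (((m₁ : ℕ) : ℝ) + ((m₂ : ℕ) : ℝ) + ((m₃ : ℕ) : ℝ)) ^ 6 *
            (((m₁ : ℕ) : ℝ) + ((m₂ : ℕ) : ℝ) + ((m₃ : ℕ) : ℝ) + ((m₄ : ℕ) : ℝ)) ^ 6 *
            (((m₁ : ℕ) : ℝ) + ((m₂ : ℕ) : ℝ) + ((m₃ : ℕ) : ℝ) + ((m₄ : ℕ) : ℝ) + ((m₅ : ℕ) : ℝ)) ^ 6)
      = Real.pi ^ 30 / 1347828286825972065254765625 := by
  rw [← toReal_esymmAbove_invPow_six_five]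
  simp only [Stuffle.toReal_esymmAbove_succ (tsum_invPow_ne_top (s := 6) (by norm_num)),
    Stuffle.esymmAbove_zero, ENNReal.toReal_one, mul_one, toReal_invPow, ← tsum_mul_left]
  push_cast
  simp only [zero_add, one_div_mul_one_div, mul_assoc]
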